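/- Let A ∈ ℝ^{n×n} be a symmetric matrix with eigenvalues β₁,…,βₙ ordered so that |β₁| ≥ ⋯ ≥ |βₙ|, and E a symmetric matrix with ‖E‖₂ < |β_k|/2. Let P_k(A+E) = U Λ Uᵀ be the eigendecomposition of the best rank-k approximation of A+E. Then for every integer a ≥ 2, ‖A U Λ^{−a} Uᵀ A‖₂ ≤ 4·(|β_k|/2)^{−a+2}. -/

import Mathlib

/-!
By Weyl's inequality `|λ_k| ≥ |β_k| - ‖E‖ > |β_k|/2 =: c`; it is proved the Courant–Fischer way,
testing `A` and `A + E` on a nonzero vector lying both in the span of the top `k` eigenvectors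
of `A` and in the span of the bottom `n - k + 1` eigenvectors of `A + E`. Hence every
eigenvalue kept in `Λ` has modulus at least `c`. Writing `W = A + E` and
`D = U Λ^{-a} Uᵀ`, the matrices `D`, `W D`, `D W`, `W D W` are diagonal in the eigenbasis of `W`
with entries of modulus at most `c^{-a}`, `c^{1-a}`, `c^{1-a}`, `c^{2-a}`, and expanding
`A D A = (W - E) D (W - E)` into four terms with `‖E‖ ≤ c` bounds each by `c^{2-a}`.
-/

open Matrix

noncomputable def opNorm {n : ℕ} (A : Matrix (Fin n) (Fin n) ℝ) : ℝ :=
  ‖Matrix.toEuclideanCLM (𝕜 := ℝ) A‖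

open scoped Matrix.Norms.L2Operator

lemma opNorm_eq_norm {n : ℕ} (A : Matrix (Fin n) (Fin n) ℝ) : opNorm A = ‖A‖ := rfl

section Orthogonal

variable {ι : Type*} [Fintype ι] [DecidableEq ι] {V : Matrix ι ι ℝ}

lemma mem_unitary_of_transpose_mul_self (hV : Vᵀ * V = 1) : V ∈ unitary (Matrix ι ι ℝ) :=
  mem_unitaryGroup_iff'.mpr (by rwa [star_eq_conjTranspose, conjTranspose_eq_transpose_of_trivial])

lemma norm_toLp_mulVec_of_transpose_mul_self (hV : Vᵀ * V = 1) (x : ι → ℝ) :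
    ‖WithLp.toLp 2 (V *ᵥ x)‖ = ‖WithLp.toLp 2 x‖ := by
  simpa using ContinuousLinearMap.norm_map_of_mem_unitary
      (Unitary.map_mem (toEuclideanCLM (n := ι) (𝕜 := ℝ)) (mem_unitary_of_transpose_mul_self hV))
      (WithLp.toLp 2 x)

lemma norm_conj_diagonal_of_transpose_mul_self (hV : Vᵀ * V = 1) (d : ι → ℝ) :
    ‖V * diagonal d * Vᵀ‖ = ‖d‖ := by
  have hV' := mem_unitary_of_transpose_mul_self hV
  have hVt : Vᵀ = star V := by rw [star_eq_conjTranspose, conjTranspose_eq_transpose_of_trivial]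
  rw [hVt, CStarRing.norm_mul_mem_unitary _ (Unitary.star_mem hV'),
    CStarRing.norm_mem_unitary_mul _ hV', l2_opNorm_diagonal]

lemma conj_diagonal_mul_conj_diagonal (hV : Vᵀ * V = 1) (d e : ι → ℝ) :
    V * diagonal d * Vᵀ * (V * diagonal e * Vᵀ) = V * diagonal (d * e) * Vᵀ := by
  rw [show diagonal (d * e) = diagonal d * diagonal e from (diagonal_mul_diagonal d e).symm]
  simp only [Matrix.mul_assoc]
  rw [← Matrix.mul_assoc Vᵀ V, hV, Matrix.one_mul]

lemma conj_diagonal_mulVec (hV : Vᵀ * V = 1) (d x : ι → ℝ) :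
    (V * diagonal d * Vᵀ) *ᵥ (V *ᵥ x) = V *ᵥ (d * x) := by
  rw [mulVec_mulVec, Matrix.mul_assoc _ Vᵀ, hV, Matrix.mul_one, ← mulVec_mulVec]
  congr 1
  funext i
  exact mulVec_diagonal d x i

end Orthogonal

lemma norm_toLp_le_of_abs_le {ι : Type*} [Fintype ι] {u v : ι → ℝ} (h : ∀ i, |u i| ≤ |v i|) :
    ‖WithLp.toLp 2 u‖ ≤ ‖WithLp.toLp 2 v‖ := by
  simp only [EuclideanSpace.norm_eq, Real.norm_eq_abs]
  exact Real.sqrt_le_sqrt (Finset.sum_le_sum fun i _ => pow_le_pow_left₀ (abs_nonneg _) (h i) 2)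

lemma le_norm_toLp_mul_of_le_abs {ι : Type*} [Fintype ι] {d y : ι → ℝ} {b : ℝ} (hb : 0 ≤ b)
    (h : ∀ i, y i ≠ 0 → b ≤ |d i|) : b * ‖WithLp.toLp 2 y‖ ≤ ‖WithLp.toLp 2 (d * y)‖ := by
  rw [← abs_of_nonneg hb, ← Real.norm_eq_abs, ← norm_smul, ← WithLp.toLp_smul]
  refine norm_toLp_le_of_abs_le fun i => ?_
  by_cases hi : y i = 0
  · simp [hi]
  · simpa [abs_mul, abs_of_nonneg hb] using mul_le_mul_of_nonneg_right (h i hi) (abs_nonneg (y i))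

lemma norm_toLp_mul_le_of_abs_le {ι : Type*} [Fintype ι] {d z : ι → ℝ} {b : ℝ} (hb : 0 ≤ b)
    (h : ∀ i, z i ≠ 0 → |d i| ≤ b) : ‖WithLp.toLp 2 (d * z)‖ ≤ b * ‖WithLp.toLp 2 z‖ := by
  rw [← abs_of_nonneg hb, ← Real.norm_eq_abs, ← norm_smul, ← WithLp.toLp_smul]
  refine norm_toLp_le_of_abs_le fun i => ?_
  by_cases hi : z i = 0
  · simp [hi]
  · simpa [abs_mul, abs_of_nonneg hb] using mul_le_mul_of_nonneg_right (h i hi) (abs_nonneg (z i))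

lemma exists_ne_zero_vanishing_above_mulVec_vanishing_below {K : Type*} [Field K] {n : ℕ}
    (Q : Matrix (Fin n) (Fin n) K) (j : Fin n) :
    ∃ y ≠ 0, (∀ i, j < i → y i = 0) ∧ ∀ i, i < j → (Q *ᵥ y) i = 0 := by
  let F : (Fin n → K) →ₗ[K] ({i // j < i} → K) × ({i // i < j} → K) :=
    (LinearMap.pi fun i => LinearMap.proj i.1).prod
      (LinearMap.pi fun i => (LinearMap.proj i.1).comp Q.mulVecLin)
  have hcard : Fintype.card {i // j < i} + Fintype.card {i // i < j} < n := by
    rw [← Fintype.card_subtype_or_disjoint _ _ fun p hp hq i hi => (hp i hi).asymm (hq i hi)]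
    simpa using Fintype.card_subtype_lt (p := fun i => j < i ∨ i < j) (x := j) (by simp)
  obtain ⟨y, hy, hy0⟩ := Submodule.exists_mem_ne_zero_of_ne_bot
    (LinearMap.ker_ne_bot_of_finrank_lt (f := F) (by simpa using hcard))
  simp only [LinearMap.mem_ker, F, LinearMap.prod_apply, Function.prod, Prod.mk_eq_zero,
    funext_iff, LinearMap.pi_apply, LinearMap.coe_comp, Function.comp_apply, LinearMap.coe_proj,
    Function.eval, mulVecLin_apply, Pi.zero_apply] at hy
  exact ⟨y, hy0, fun i hi => hy.1 ⟨i, hi⟩, fun i hi => hy.2 ⟨i, hi⟩⟩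

lemma abs_sub_opNorm_le_abs_of_antitone {n : ℕ} {A E P V : Matrix (Fin n) (Fin n) ℝ}
    {β lam : Fin n → ℝ} (hP : Pᵀ * P = 1) (hA : A = P * diagonal β * Pᵀ)
    (hβ : Antitone fun i => |β i|) (hV : Vᵀ * V = 1) (hAE : A + E = V * diagonal lam * Vᵀ)
    (hlam : Antitone fun i => |lam i|) (j : Fin n) :
    |β j| - opNorm E ≤ |lam j| := by
  obtain ⟨y, hy0, hy, hz⟩ := exists_ne_zero_vanishing_above_mulVec_vanishing_below (Vᵀ * P) j
  set x := P *ᵥ y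
  set z := Vᵀ *ᵥ x
  have hxz : x = V *ᵥ z := by rw [mulVec_mulVec, mul_eq_one_comm.mp hV, one_mulVec]
  have hz : ∀ i, i < j → z i = 0 := fun i hi => by simpa [z, x, mulVec_mulVec] using hz i hi
  have hnx : ‖WithLp.toLp 2 x‖ = ‖WithLp.toLp 2 y‖ := norm_toLp_mulVec_of_transpose_mul_self hP y
  have hnz : ‖WithLp.toLp 2 z‖ = ‖WithLp.toLp 2 y‖ := by
    rw [← hnx, hxz, norm_toLp_mulVec_of_transpose_mul_self hV]
  have hAx : |β j| * ‖WithLp.toLp 2 y‖ ≤ ‖WithLp.toLp 2 (A *ᵥ x)‖ := by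
    rw [hA, conj_diagonal_mulVec hP, norm_toLp_mulVec_of_transpose_mul_self hP]
    exact le_norm_toLp_mul_of_le_abs (abs_nonneg _) fun i hi => hβ (not_lt.mp (mt (hy i) hi))
  have hAEx : ‖WithLp.toLp 2 ((A + E) *ᵥ x)‖ ≤ |lam j| * ‖WithLp.toLp 2 y‖ := by
    rw [hAE, hxz, conj_diagonal_mulVec hV, norm_toLp_mulVec_of_transpose_mul_self hV, ← hnz]
    exact norm_toLp_mul_le_of_abs_le (abs_nonneg _) fun i hi => hlam (not_lt.mp (mt (hz i) hi))
  have hEx : ‖WithLp.toLp 2 (E *ᵥ x)‖ ≤ opNorm E * ‖WithLp.toLp 2 y‖ := by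
    rw [← hnx, ← toEuclideanCLM_toLp]
    exact (toEuclideanCLM (𝕜 := ℝ) E).le_opNorm _
  have htri : ‖WithLp.toLp 2 (A *ᵥ x)‖
      ≤ ‖WithLp.toLp 2 ((A + E) *ᵥ x)‖ + ‖WithLp.toLp 2 (E *ᵥ x)‖ := by
    rw [show A *ᵥ x = (A + E) *ᵥ x - E *ᵥ x by rw [add_mulVec, add_sub_cancel_right],
      WithLp.toLp_sub]
    exact norm_sub_le _ _
  have hy_pos : 0 < ‖WithLp.toLp 2 y‖ := norm_pos_iff.mpr fun h => hy0 (by simpa using h)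
  have key : |β j| * ‖WithLp.toLp 2 y‖ ≤ (|lam j| + opNorm E) * ‖WithLp.toLp 2 y‖ := by linarith
  linarith [le_of_mul_le_mul_right key hy_pos]

lemma submatrix_mul_diagonal_mul_transpose {m ι κ R : Type*} [Fintype ι] [Fintype κ]
    [DecidableEq ι] [DecidableEq κ] [CommSemiring R] (M : Matrix m κ R) {e : ι → κ}
    (he : Function.Injective e) (d : ι → R) :
    M.submatrix id e * diagonal d * (M.submatrix id e)ᵀ
      = M * diagonal (Function.extend e d 0) * Mᵀ := by
  ext i j
  rw [mul_apply, mul_apply]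
  simp only [mul_diagonal, submatrix_apply, id, transpose_apply]
  refine Fintype.sum_of_injective e he _ _ (fun x hx => ?_) (fun x => by rw [he.extend_apply])
  rw [Function.extend_apply' _ _ _ (by simpa using hx), Pi.zero_apply, mul_zero, zero_mul]

lemma abs_pow_mul_extend_inv_pow_le {ι κ : Type*} {e : ι → κ} (he : Function.Injective e)
    {f : κ → ℝ} {c : ℝ} (hc : 0 < c) (hf : ∀ j, c ≤ |f (e j)|) {m a : ℕ} (hma : m ≤ a) (x : κ) :
    |f x ^ m * Function.extend e (fun j => (f (e j))⁻¹ ^ a) 0 x| ≤ c ^ ((m : ℤ) - a) := by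
  by_cases hx : ∃ j, e j = x
  · obtain ⟨j, rfl⟩ := hx
    obtain ⟨r, rfl⟩ := Nat.exists_eq_add_of_le hma
    have hfj : f (e j) ≠ 0 := abs_pos.mp (hc.trans_le (hf j))
    rw [he.extend_apply, pow_add, ← mul_assoc, ← mul_pow, mul_inv_cancel₀ hfj, one_pow, one_mul,
      abs_pow, abs_inv, show (m : ℤ) - (m + r : ℕ) = -(r : ℤ) by push_cast; ring, _root_.zpow_neg,
      zpow_natCast, ← inv_pow]
    exact pow_le_pow_left₀ (by positivity) (inv_anti₀ hc (hf j)) _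
  · rw [Function.extend_apply' _ _ _ hx, Pi.zero_apply, mul_zero, abs_zero]
    positivity

lemma norm_sub_mul_mul_sub_le {R : Type*} [NormedRing R] {W E D : R} {c : ℝ} {p : ℤ}
    (hc : 0 < c) (hE : ‖E‖ ≤ c) (hD : ‖D‖ ≤ c ^ (p - 2)) (hWD : ‖W * D‖ ≤ c ^ (p - 1))
    (hDW : ‖D * W‖ ≤ c ^ (p - 1)) (hWDW : ‖W * D * W‖ ≤ c ^ p) :
    ‖(W - E) * D * (W - E)‖ ≤ 4 * c ^ p := by
  have hexpand : (W - E) * D * (W - E) = W * D * W - E * (D * W) - W * D * E + E * D * E := by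
    noncomm_ring
  calc ‖(W - E) * D * (W - E)‖
      ≤ ‖W * D * W‖ + ‖E‖ * ‖D * W‖ + ‖W * D‖ * ‖E‖ + ‖E‖ * ‖D‖ * ‖E‖ := by
        rw [hexpand]
        refine (norm_add_le _ _).trans (add_le_add ?_ (norm_mul₃_le ..))
        refine (norm_sub_le _ _).trans (add_le_add ?_ (norm_mul_le _ _))
        exact (norm_sub_le _ _).trans (add_le_add le_rfl (norm_mul_le _ _))
    _ ≤ c ^ p + c * c ^ (p - 1) + c ^ (p - 1) * c + c * c ^ (p - 2) * c := by gcongr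
    _ = 4 * c ^ p := by
        rw [zpow_sub₀ hc.ne', zpow_sub₀ hc.ne']
        field_simp
        ring

lemma norm_sub_mul_conj_diagonal_mul_sub_le {ι : Type*} [Fintype ι] [DecidableEq ι]
    {V E : Matrix ι ι ℝ} (hV : Vᵀ * V = 1) {lam d : ι → ℝ} {c : ℝ} {p : ℤ} (hc : 0 < c)
    (hE : ‖E‖ ≤ c) (hd : ∀ m : ℕ, m ≤ 2 → ‖lam ^ m * d‖ ≤ c ^ (p - 2 + m)) :
    ‖(V * diagonal lam * Vᵀ - E) * (V * diagonal d * Vᵀ) * (V * diagonal lam * Vᵀ - E)‖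
      ≤ 4 * c ^ p := by
  have h : ∀ m : ℕ, m ≤ 2 → ‖V * diagonal (lam ^ m * d) * Vᵀ‖ ≤ c ^ (p - 2 + m) := fun m hm =>
    (norm_conj_diagonal_of_transpose_mul_self hV _).trans_le (hd m hm)
  refine norm_sub_mul_mul_sub_le hc hE ?_ ?_ ?_ ?_
  · simpa using h 0 (by norm_num)
  · rw [conj_diagonal_mul_conj_diagonal hV]
    simpa [sub_add] using h 1 (by norm_num)
  · rw [conj_diagonal_mul_conj_diagonal hV, mul_comm]
    simpa [sub_add] using h 1 (by norm_num)
  · rw [conj_diagonal_mul_conj_diagonal hV, conj_diagonal_mul_conj_diagonal hV, mul_right_comm,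
      ← sq]
    simpa using h 2 le_rfl

/-- In the setting of the rank-`k` projection lemma (`A` symmetric with eigenvalues
`β` sorted by magnitude, `|β_k| > 0`, `E` symmetric with `‖E‖₂ < |β_k|/2`,
`P_k(A+E) = U Λ Uᵀ`), for every integer `a ≥ 2`:
`‖A U Λ^{−a} Uᵀ A‖₂ ≤ 4 (|β_k|/2)^{−a+2}`. -/
theorem stmt4 (n k : ℕ) (hkn : k < n)
    (A E : Matrix (Fin n) (Fin n) ℝ)
    (P V : Matrix (Fin n) (Fin n) ℝ) (β lam : Fin n → ℝ)
    (hP : Pᵀ * P = 1) (hAdecomp : A = P * Matrix.diagonal β * Pᵀ)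
    (hβsorted : Antitone (fun i => |β i|))
    (hV : Vᵀ * V = 1) (hWdecomp : A + E = V * Matrix.diagonal lam * Vᵀ)
    (hlamsorted : Antitone (fun i => |lam i|))
    (hEnorm : opNorm E < |β ⟨k - 1, by omega⟩| / 2)
    (U : Matrix (Fin n) (Fin k) ℝ)
    (hU : U = Matrix.of fun i (j : Fin k) => V i (Fin.castLE hkn.le j)) :
    ∀ a : ℕ, 2 ≤ a →
      opNorm (A * U *
          Matrix.diagonal (fun j : Fin k => ((lam (Fin.castLE hkn.le j))⁻¹) ^ a) * Uᵀ * A)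
        ≤ 4 * (|β ⟨k - 1, by omega⟩| / 2) ^ ((2 : ℤ) - (a : ℤ)) := by
  intro a ha
  set c := |β ⟨k - 1, by omega⟩| / 2 with hc_def
  have hc : 0 < c := (norm_nonneg _).trans_lt hEnorm
  have hlam : ∀ j : Fin k, c ≤ |lam (Fin.castLE hkn.le j)| := fun j => by
    have hweyl := abs_sub_opNorm_le_abs_of_antitone hP hAdecomp hβsorted hV hWdecomp hlamsorted
      ⟨k - 1, by omega⟩
    have hsorted : |lam ⟨k - 1, by omega⟩| ≤ |lam (Fin.castLE hkn.le j)| :=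
      hlamsorted (Fin.le_def.mpr (by simp only [Fin.val_castLE]; omega))
    linarith
  set d := Function.extend (Fin.castLE hkn.le) (fun j => (lam (Fin.castLE hkn.le j))⁻¹ ^ a) 0
  have hd : ∀ m ≤ a, ‖lam ^ m * d‖ ≤ c ^ ((m : ℤ) - a) := fun m hm =>
    (pi_norm_le_iff_of_nonneg (by positivity)).mpr fun i =>
      abs_pow_mul_extend_inv_pow_le (Fin.castLE_injective _) hc hlam hm i
  have hUD : U * diagonal (fun j => (lam (Fin.castLE hkn.le j))⁻¹ ^ a) * Uᵀ
      = V * diagonal d * Vᵀ :=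
    hU ▸ submatrix_mul_diagonal_mul_transpose V (Fin.castLE_injective _) _
  rw [Matrix.mul_assoc A U, Matrix.mul_assoc A, hUD, eq_sub_of_add_eq hWdecomp, opNorm_eq_norm]
  rw [opNorm_eq_norm] at hEnorm
  refine norm_sub_mul_conj_diagonal_mul_sub_le hV hc hEnorm.le fun m hm => ?_
  convert hd m (by omega) using 2
  ring
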